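/- Let σ be a type and ts = [(S₁,b₁),…,(Sₙ,bₙ)] a list of n pairs of a subset of σ and a Boolean star flag. Then there exist a finite type S with card S ≤ n + 3 and a deterministic finite automaton D over the product alphabet σ × Fin (n+1) with state type S such that π(D.accepts) equals the concatenation of the universal language over σ with L(ts), i.e. {u ++ v | u : List σ, v ∈ L(ts)}. -/

import Mathlib

/-- The projection of a language over a product alphabet `α × β` onto `α`,
obtained by mapping each letter of each word to its first component. -/
def projLang {α β : Type} (L : Language (α × β)) : Language α :=
  (fun w : List (α × β) => w.map Prod.fst) '' L

/-- The single-symbol language of a set `S ⊆ σ`: all length-one words whose letter lies in `S`. -/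
def singleLang {σ : Type} (S : Set σ) : Language σ := {w | ∃ a ∈ S, w = [a]}

/-- The chain language of a list `ts = [(S₁,b₁),…,(Sₙ,bₙ)]`: the concatenation
`L₁ * ⋯ * Lₙ` where `Lᵢ` is the single-symbol language of `Sᵢ` if `bᵢ = false`, and its
Kleene star if `bᵢ = true`. -/
def chainLang {σ : Type} (ts : List (Set σ × Bool)) : Language σ :=
  (ts.map fun p => if p.2 then KStar.kstar (singleLang p.1) else singleLang p.1).prod


/-! The obvious nondeterministic automaton for `Σ* · L(ts)` has as states the suffixes of
`(Σ, *) :: ts`; on a letter it may skip any run of starred factors and read the letter in the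
next factor. Its only nondeterminism is the index of that factor, which is at most `n`, so the
second component of each input letter can supply it, and the automaton becomes deterministic
with a rejecting sink for wrong guesses. Projecting the guesses away leaves exactly the chain
language of `(Σ, *) :: ts`, that is `Σ* · L(ts)`. -/

open scoped Computability

section ChoiceDFA

variable {α β Q : Type}

theorem mem_projLang {L : Language (α × β)} {x : List α} :
    x ∈ projLang L ↔ ∃ y ∈ L, y.map Prod.fst = x :=
  Iff.rfl

def choiceDFA (next : Q → α → β → Option Q) (start : Q) (accept : Set Q) :
    DFA (α × β) (Option Q) where
  step s c := s.bind fun q => next q c.1 c.2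
  start := some start
  accept := some '' accept

variable {next : Q → α → β → Option Q} {start : Q} {accept : Set Q}

theorem choiceDFA_evalFrom_none (x : List (α × β)) :
    (choiceDFA next start accept).evalFrom none x = none := by
  induction x with
  | nil => rfl
  | cons c x ih => exact ih

theorem choiceDFA_evalFrom_cons (q : Q) (a : α) (b : β) (y : List (α × β)) :
    (choiceDFA next start accept).evalFrom (some q) ((a, b) :: y) =
      (choiceDFA next start accept).evalFrom (next q a b) y :=
  rfl

theorem projLang_choiceDFA_acceptsFrom (L : Q → Language α)
    (nil_mem : ∀ q, [] ∈ L q ↔ q ∈ accept)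
    (cons_mem : ∀ q a v, a :: v ∈ L q ↔ ∃ b q', next q a b = some q' ∧ v ∈ L q') (q : Q) :
    projLang ((choiceDFA next start accept).acceptsFrom (some q)) = L q := by
  ext x
  induction x generalizing q with
  | nil => simp [mem_projLang, DFA.mem_acceptsFrom, nil_mem, choiceDFA]
  | cons a v ih =>
    simp only [mem_projLang, DFA.mem_acceptsFrom, List.map_eq_cons_iff, cons_mem] at ih ⊢
    constructor
    · rintro ⟨_, hacc, ⟨a, b⟩, y, rfl, rfl, rfl⟩
      rw [choiceDFA_evalFrom_cons] at hacc
      cases hnext : next q a b with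
      | none =>
        rw [hnext, choiceDFA_evalFrom_none] at hacc
        simp [choiceDFA] at hacc
      | some q' => exact ⟨b, q', hnext, (ih q').1 ⟨y, by rwa [hnext] at hacc, rfl⟩⟩
    · rintro ⟨b, q', hnext, hv⟩
      obtain ⟨y, hacc, rfl⟩ := (ih q').2 hv
      exact ⟨(a, b) :: y, by rwa [choiceDFA_evalFrom_cons, hnext], (a, b), y, rfl, rfl, rfl⟩

end ChoiceDFA

section ChainLang

variable {σ : Type}

theorem nil_mem_mul_iff {L M : Language σ} : [] ∈ L * M ↔ [] ∈ L ∧ [] ∈ M := by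
  simp [Language.mem_mul]

theorem nil_notMem_singleLang {S : Set σ} : [] ∉ singleLang S := by
  rintro ⟨a, -, h⟩
  cases h

theorem cons_mem_singleLang_mul_iff {S : Set σ} {L : Language σ} {a : σ} {v : List σ} :
    a :: v ∈ singleLang S * L ↔ a ∈ S ∧ v ∈ L := by
  constructor
  · rintro ⟨_, ⟨b, hb, rfl⟩, w, hw, h⟩
    obtain ⟨rfl, rfl⟩ := List.cons_eq_cons.1 h
    exact ⟨hb, hw⟩
  · rintro ⟨ha, hv⟩
    exact ⟨[a], ⟨a, ha, rfl⟩, v, hv, rfl⟩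

theorem chainLang_nil : chainLang ([] : List (Set σ × Bool)) = 1 :=
  rfl

theorem chainLang_cons (p : Set σ × Bool) (l : List (Set σ × Bool)) :
    chainLang (p :: l) = (if p.2 then (singleLang p.1)∗ else singleLang p.1) * chainLang l :=
  rfl

theorem nil_mem_chainLang_iff {l : List (Set σ × Bool)} :
    [] ∈ chainLang l ↔ ∀ p ∈ l, p.2 = true := by
  induction l with
  | nil => simp [chainLang_nil, Language.mem_one]
  | cons p l ih =>
    rw [chainLang_cons, nil_mem_mul_iff, ih, List.forall_mem_cons]
    rcases p with ⟨S, _ | _⟩ <;> simp [nil_notMem_singleLang, Language.nil_mem_kstar]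

theorem cons_mem_chainLang_cons_iff {p : Set σ × Bool} {l : List (Set σ × Bool)} {a : σ}
    {v : List σ} :
    a :: v ∈ chainLang (p :: l) ↔
      (p.2 = true ∧ a :: v ∈ chainLang l) ∨
        (a ∈ p.1 ∧ v ∈ chainLang (if p.2 then p :: l else l)) := by
  rcases p with ⟨S, _ | _⟩
  · simp [chainLang_cons, cons_mem_singleLang_mul_iff]
  · rw [chainLang_cons, if_pos rfl, ← Language.one_add_self_mul_kstar_eq_kstar, add_mul, one_mul,
      mul_assoc, Language.mem_add, cons_mem_singleLang_mul_iff]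
    simp [chainLang_cons]

/-- Past the end of `l`, `getD` yields the factor `(∅, false)`, which reads no letter, so
`r < l.length` is implied. -/
def CanReadAt (l : List (Set σ × Bool)) (a : σ) (r : ℕ) : Prop :=
  (∀ p ∈ l.take r, p.2 = true) ∧ a ∈ (l.getD r (∅, false)).1

def readSuffix (l : List (Set σ × Bool)) (r : ℕ) : List (Set σ × Bool) :=
  if (l.getD r (∅, false)).2 then l.drop r else l.drop (r + 1)

theorem CanReadAt.lt_length {l : List (Set σ × Bool)} {a : σ} {r : ℕ} (h : CanReadAt l a r) :
    r < l.length := by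
  by_contra! hr
  simp only [CanReadAt, List.getD_eq_default _ _ hr] at h
  exact h.2

theorem cons_mem_chainLang_iff {l : List (Set σ × Bool)} {a : σ} {v : List σ} :
    a :: v ∈ chainLang l ↔ ∃ r, CanReadAt l a r ∧ v ∈ chainLang (readSuffix l r) := by
  induction l with
  | nil => simp [chainLang_nil, Language.mem_one, CanReadAt]
  | cons p l ih =>
    rw [← Nat.or_exists_add_one, cons_mem_chainLang_cons_iff, ih, or_comm]
    rcases p with ⟨S, _ | _⟩ <;> simp [CanReadAt, readSuffix]

theorem mem_kstar_singleLang_univ (w : List σ) : w ∈ (singleLang Set.univ)∗ := by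
  induction w with
  | nil => exact Language.nil_mem_kstar _
  | cons a w ih =>
    rw [← Language.one_add_self_mul_kstar_eq_kstar, Language.mem_add]
    exact Or.inr (cons_mem_singleLang_mul_iff.2 ⟨trivial, ih⟩)

end ChainLang

section ChainMonitor

variable {σ : Type}

theorem readSuffix_suffix (l : List (Set σ × Bool)) (r : ℕ) : readSuffix l r <:+ l := by
  unfold readSuffix
  split_ifs <;> exact List.drop_suffix _ l

open Classical in
noncomputable def chainMonitor (l : List (Set σ × Bool)) :
    DFA (σ × Fin l.length) (Option {s // s ∈ l.tails}) :=
  choiceDFA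
    (fun s a r => if CanReadAt s.1 a r then
      some ⟨readSuffix s.1 r, (List.mem_tails _ _).2
        ((readSuffix_suffix s.1 r).trans ((List.mem_tails _ _).1 s.2))⟩ else none)
    ⟨l, (List.mem_tails _ _).2 (List.suffix_refl l)⟩ {s | ∀ p ∈ s.1, p.2 = true}

theorem projLang_chainMonitor_accepts (l : List (Set σ × Bool)) :
    projLang (chainMonitor l).accepts = chainLang l := by
  unfold chainMonitor
  refine projLang_choiceDFA_acceptsFrom (fun s : {s // s ∈ l.tails} => chainLang s.1)
    (fun _ => nil_mem_chainLang_iff) (fun s a v => ?_) _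
  rw [cons_mem_chainLang_iff]
  constructor
  · rintro ⟨r, hr, hv⟩
    have hrl : r < l.length :=
      hr.lt_length.trans_le ((List.mem_tails _ _).1 s.2).length_le
    exact ⟨⟨r, hrl⟩, _, if_pos hr, hv⟩
  · rintro ⟨r, s', hnext, hv⟩
    split_ifs at hnext with hr
    cases hnext
    exact ⟨r, hr, hv⟩

open Classical in
theorem card_option_tails_le (l : List (Set σ × Bool)) :
    Fintype.card (Option {s // s ∈ l.tails}) ≤ l.length + 2 := by
  have : Fintype.card {s // s ∈ l.tails} ≤ l.length + 1 :=
    calc Fintype.card {s // s ∈ l.tails} = l.tails.toFinset.card := by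
          convert Fintype.card_coe l.tails.toFinset using 2; simp
      _ ≤ l.tails.length := List.toFinset_card_le _
      _ = l.length + 1 := List.length_tails l
  simpa using this

end ChainMonitor

/-- Deterministic monitor circuit: for every list `ts` of `n` pairs there exist a finite
type `S` with `card S ≤ n + 3` and a DFA `D` over the product alphabet `σ × Fin (n+1)` with
state type `S` such that `π(D.accepts)` is exactly the set of words ending in a match of
the chain, i.e. the concatenation of the universal language over `σ` with `L(ts)`. -/
theorem chain_monitor_dfa_free_inputs {σ : Type} (ts : List (Set σ × Bool)) :
    ∃ (S : Type) (_ : Fintype S), Fintype.card S ≤ ts.length + 3 ∧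
      ∃ D : DFA (σ × Fin (ts.length + 1)) S,
        projLang D.accepts = {w : List σ | ∃ (u v : List σ), v ∈ chainLang ts ∧ w = u ++ v} := by
  classical
  let l := (Set.univ, true) :: ts
  refine ⟨_, inferInstance, card_option_tails_le l, chainMonitor l, ?_⟩
  rw [projLang_chainMonitor_accepts, chainLang_cons]
  ext w
  exact ⟨fun ⟨u, _, v, hv, h⟩ => ⟨u, v, hv, h.symm⟩,
    fun ⟨u, v, hv, h⟩ => ⟨u, mem_kstar_singleLang_univ u, v, hv, h.symm⟩⟩
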